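/- arXiv:2505.22967 — 6 statements merged into one kernel-verified Lean document; each statement's English description precedes it below -/
import Mathlib

section
/- Let E : V → V → Prop and let a b : V satisfy E a b, and let E' be the subdivision of E at (a,b). Then for all x y : V, Relation.ReflTransGen E x y holds if and only if Relation.ReflTransGen E' (some x) (some y) holds. -/
/-- The subdivision of an edge relation `E` at the edge `(a,b)`: a new vertex
(`none`) is inserted on the edge from `a` to `b`. -/
def Subdiv {V : Type*} (E : V → V → Prop) (a b : V) :
    Option V → Option V → Prop
  | some x, some y => E x y ∧ ¬(x = a ∧ y = b)
  | some x, none => x = a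
  | none, some y => y = b
  | none, none => False

/-!
Every `E`-edge other than `(a, b)` survives in the subdivision, and `(a, b)` becomes the path
`a → none → b`. Conversely, collapsing `none` onto `b` sends each edge of the subdivision to an
`E`-edge or a loop at `b`; the new edge `a → none` becomes `E a b`.
-/

namespace Subdiv

variable {V : Type*} {E : V → V → Prop} {a b : V}

theorem reflTransGen_some_of_rel {x y : V} (h : E x y) :
    Relation.ReflTransGen (Subdiv E a b) (some x) (some y) := by
  by_cases hxy : x = a ∧ y = b
  · obtain ⟨rfl, rfl⟩ := hxy
    exact .tail (.single (show Subdiv E x y (some x) none from rfl))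
      (show Subdiv E x y none (some y) from rfl)
  · exact .single ⟨h, hxy⟩

theorem reflTransGen_getD_of_subdiv (hab : E a b) :
    ∀ {o o' : Option V}, Subdiv E a b o o' →
      Relation.ReflTransGen E (o.getD b) (o'.getD b)
  | some _, some _, h => .single h.1
  | some _, none, h => h ▸ .single hab
  | none, some _, h => h ▸ .refl
  | none, none, h => h.elim

end Subdiv

/-- Subdivision at an existing edge preserves reachability between the
original vertices, in both directions. -/
theorem subdiv_reflTransGen_iff {V : Type*} (E : V → V → Prop)
    (a b : V) (hab : E a b) :
    ∀ x y : V, Relation.ReflTransGen E x y ↔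
      Relation.ReflTransGen (Subdiv E a b) (some x) (some y) :=
  fun x y =>
    ⟨Relation.ReflTransGen.lift' some (fun _ _ => Subdiv.reflTransGen_some_of_rel) x y,
      Relation.ReflTransGen.lift' (fun o : Option V => o.getD b)
        (fun _ _ => Subdiv.reflTransGen_getD_of_subdiv hab) (some x) (some y)⟩
end

section
/- Let E : V → V → Prop be acyclic and let a b : V satisfy E a b. Then the subdivision E' of E at (a,b) is acyclic, i.e. Relation.TransGen E' is irreflexive on Option V. -/
namespace Subdiv

variable {V : Type*} {E : V → V → Prop} {a b : V}

theorem getD_eq_of_none {v : Option V} (h : Subdiv E a b none v) : v.getD b = b := by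
  cases v with
  | none => exact h.elim
  | some y => exact h

theorem rel_getD_of_some (hab : E a b) {x : V} {v : Option V} (h : Subdiv E a b (some x) v) :
    E x (v.getD b) := by
  cases v with
  | none => exact h ▸ hab
  | some y => exact h.1

theorem transGen_getD_of_some (hab : E a b) {x : V} {v : Option V}
    (h : Relation.TransGen (Subdiv E a b) (some x) v) : Relation.TransGen E x (v.getD b) := by
  induction h with
  | single hstep => exact .single (rel_getD_of_some hab hstep)
  | @tail w v _ hstep ih =>
    cases w with
    | none => rw [getD_eq_of_none hstep]; exact ih
    | some y => exact ih.tail (rel_getD_of_some hab hstep)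

end Subdiv

/-- Subdivision of an acyclic edge relation at an existing edge is acyclic. -/
theorem subdiv_acyclic {V : Type*} (E : V → V → Prop)
    (hacyc : ∀ v : V, ¬ Relation.TransGen E v v)
    (a b : V) (hab : E a b) :
    ∀ v : Option V, ¬ Relation.TransGen (Subdiv E a b) v v := by
  intro v hv
  cases v with
  | some x => exact hacyc x (Subdiv.transGen_getD_of_some hab hv)
  | none =>
    obtain ⟨c, hstep, hback⟩ := Relation.TransGen.head'_iff.mp hv
    cases c with
    | none => exact hstep
    | some y => exact hacyc y (Subdiv.transGen_getD_of_some hab (.tail' hback hstep))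
end

section
/- Let E : V → V → Prop be acyclic and let a b c : V satisfy E a b and E b c. Then the deletion of b with bypass edge, E' x y ↔ (E x y ∧ x ≠ b ∧ y ≠ b) ∨ (x = a ∧ y = c), is acyclic. -/
/-! Every edge of the new relation is a path of `E` (the bypass `a → c` being `a → b → c`),
so a cycle of the new relation would unfold to a cycle of `E`. -/

namespace Relation

theorem TransGen.irrefl_of_imp_transGen {α : Type*} {r s : α → α → Prop}
    (h : ∀ x y, r x y → TransGen s x y) (hs : ∀ v, ¬ TransGen s v v) (v : α) :
    ¬ TransGen r v v :=
  fun hv => hs v (hv.lift' id h)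

end Relation

/-- Deleting a node `b` lying on a path `a → b → c` (with a bypass edge from
`a` to `c`) in an acyclic edge relation yields an acyclic relation. -/
theorem delete_acyclic {V : Type*} (E : V → V → Prop)
    (hacyc : ∀ v : V, ¬ Relation.TransGen E v v)
    (a b c : V) (hab : E a b) (hbc : E b c) :
    ∀ v : V,
      ¬ Relation.TransGen
        (fun x y => (E x y ∧ x ≠ b ∧ y ≠ b) ∨ (x = a ∧ y = c)) v v := by
  refine Relation.TransGen.irrefl_of_imp_transGen ?_ hacyc
  rintro x y (⟨hxy, -, -⟩ | ⟨rfl, rfl⟩)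
  · exact .single hxy
  · exact .tail (.single hab) hbc
end

section
/- Let E : V → V → Prop, and let a b c : V satisfy E a b and E b c. Assume a is the unique in-neighbor of b (∀ x, E x b → x = a) and c is the unique out-neighbor of b (∀ y, E b y → y = c). Let E' be the deletion of b with bypass edge, E' x y ↔ (E x y ∧ x ≠ b ∧ y ≠ b) ∨ (x = a ∧ y = c). Then for all x y : V with x ≠ b and y ≠ b, Relation.ReflTransGen E x y holds if and only if Relation.ReflTransGen E' x y holds. -/
/-! Collapsing `b` onto `c` sends every edge of `E` to a path of the bypass relation: `a → b`
becomes the bypass edge `a → c`, `b → c` becomes a loop at `c`, and every other edge survives.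
Since the collapse fixes all vertices other than `b`, reachability in `E` between such vertices
implies reachability after the deletion. Conversely the bypass edge `a → c` unfolds to
`a → b → c`. -/

open Function Relation

section

variable {V : Type*} {E : V → V → Prop} {a b c : V}

def bypass (E : V → V → Prop) (a b c : V) : V → V → Prop :=
  fun u v => (E u v ∧ u ≠ b ∧ v ≠ b) ∨ (u = a ∧ v = c)

theorem reflTransGen_of_reflTransGen_bypass (hab : E a b) (hbc : E b c) {x y : V}
    (h : ReflTransGen (bypass E a b c) x y) : ReflTransGen E x y :=
  reflTransGen_closed (fun _ _ huv => by
    rcases huv with ⟨he, -, -⟩ | ⟨rfl, rfl⟩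
    exacts [.single he, .head hab (.single hbc)]) _ _ h

theorem reflTransGen_bypass_update_of_edge [DecidableEq V]
    (hin : ∀ x, E x b → x = a) (hout : ∀ y, E b y → y = c) {u v : V} (he : E u v) :
    ReflTransGen (bypass E a b c) (update id b c u) (update id b c v) := by
  by_cases hu : u = b
  · obtain rfl := hout v (hu ▸ he)
    simpa [hu, update_apply] using ReflTransGen.refl
  by_cases hv : v = b
  · obtain rfl := hin u (hv ▸ he)
    simpa [hu, hv] using ReflTransGen.single (show bypass E u b c u c from .inr ⟨rfl, rfl⟩)
  · simpa [hu, hv] using ReflTransGen.single (show bypass E a b c u v from .inl ⟨he, hu, hv⟩)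

theorem reflTransGen_bypass_of_reflTransGen (hin : ∀ x, E x b → x = a) (hout : ∀ y, E b y → y = c)
    {x y : V} (hx : x ≠ b) (hy : y ≠ b) (h : ReflTransGen E x y) :
    ReflTransGen (bypass E a b c) x y := by
  classical
  have := ReflTransGen.lift' (update id b c)
    (fun _ _ he => reflTransGen_bypass_update_of_edge hin hout he) _ _ h
  simpa only [onFun, update_of_ne hx, update_of_ne hy, id] using this

end

/-- If `a → b → c` is a linear path (i.e. `a` is the unique in-neighbor of `b`
and `c` its unique out-neighbor), then deleting `b` with a bypass edge
preserves reachability between vertices other than `b`, in both directions. -/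
theorem delete_reflTransGen_iff {V : Type*} (E : V → V → Prop)
    (a b c : V) (hab : E a b) (hbc : E b c)
    (hin : ∀ x, E x b → x = a) (hout : ∀ y, E b y → y = c) :
    ∀ x y : V, x ≠ b → y ≠ b →
      (Relation.ReflTransGen E x y ↔
        Relation.ReflTransGen
          (fun u v => (E u v ∧ u ≠ b ∧ v ≠ b) ∨ (u = a ∧ v = c)) x y) :=
  fun _ _ hx hy =>
    ⟨reflTransGen_bypass_of_reflTransGen hin hout hx hy, reflTransGen_of_reflTransGen_bypass hab hbc⟩
end

section
/- Let E1 : V1 → V1 → Prop be fully connected with respect to input i1 and output o1, and E2 : V2 → V2 → Prop be fully connected with respect to input i2 and output o2. Then the serial composition E of E1 and E2 on V1 ⊕ V2 (through o1 and i2) is fully connected with respect to input Sum.inl i1 and output Sum.inr o2: every vertex of V1 ⊕ V2 is reachable from Sum.inl i1 under E and reaches Sum.inr o2 under E. -/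
/-- Serial composition of two edge relations on `V1 ⊕ V2`, connecting the
designated output `o1` of the first graph to the designated input `i2` of
the second. -/
def SerialComp {V1 V2 : Type*} (E1 : V1 → V1 → Prop) (E2 : V2 → V2 → Prop)
    (o1 : V1) (i2 : V2) : V1 ⊕ V2 → V1 ⊕ V2 → Prop
  | Sum.inl x, Sum.inl y => E1 x y
  | Sum.inr x, Sum.inr y => E2 x y
  | Sum.inl x, Sum.inr y => x = o1 ∧ y = i2
  | Sum.inr _, Sum.inl _ => False

namespace SerialComp

open Relation

variable {V1 V2 : Type*} {E1 : V1 → V1 → Prop} {E2 : V2 → V2 → Prop} {o1 : V1} {i2 : V2}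

theorem reflTransGen_inl {a b : V1} (h : ReflTransGen E1 a b) :
    ReflTransGen (SerialComp E1 E2 o1 i2) (Sum.inl a) (Sum.inl b) :=
  h.lift Sum.inl fun _ _ => id

theorem reflTransGen_inr {a b : V2} (h : ReflTransGen E2 a b) :
    ReflTransGen (SerialComp E1 E2 o1 i2) (Sum.inr a) (Sum.inr b) :=
  h.lift Sum.inr fun _ _ => id

theorem reflTransGen_inl_inr {a : V1} {b : V2} (ha : ReflTransGen E1 a o1)
    (hb : ReflTransGen E2 i2 b) :
    ReflTransGen (SerialComp E1 E2 o1 i2) (Sum.inl a) (Sum.inr b) :=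
  have bridge : SerialComp E1 E2 o1 i2 (Sum.inl o1) (Sum.inr i2) := ⟨rfl, rfl⟩
  ((reflTransGen_inl ha).tail bridge).trans (reflTransGen_inr hb)

end SerialComp

open SerialComp in
/-- The serial composition of two fully connected edge relations is fully
connected with respect to input `Sum.inl i1` and output `Sum.inr o2`. -/
theorem serialComp_fullyConnected {V1 V2 : Type*}
    (E1 : V1 → V1 → Prop) (i1 o1 : V1)
    (E2 : V2 → V2 → Prop) (i2 o2 : V2)
    (hconn1 : ∀ v : V1, Relation.ReflTransGen E1 i1 v ∧ Relation.ReflTransGen E1 v o1)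
    (hconn2 : ∀ v : V2, Relation.ReflTransGen E2 i2 v ∧ Relation.ReflTransGen E2 v o2) :
    ∀ v : V1 ⊕ V2,
      Relation.ReflTransGen (SerialComp E1 E2 o1 i2) (Sum.inl i1) v ∧
      Relation.ReflTransGen (SerialComp E1 E2 o1 i2) v (Sum.inr o2) := by
  rintro (x | x)
  · exact ⟨reflTransGen_inl (hconn1 x).1, reflTransGen_inl_inr (hconn1 x).2 (hconn2 o2).1⟩
  · exact ⟨reflTransGen_inl_inr (hconn1 i1).2 (hconn2 x).1, reflTransGen_inr (hconn2 x).2⟩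
end

section
/- Let E be an edge relation on V0 ⊕ V1 that is well-typed for the componentwise type assignments given by (Tin0, Tout0) on V0 and (Tin1, Tout1) on V1, and suppose every cross edge from the V0-side to the V1-side has target Sum.inr i1 and every cross edge from the V1-side to the V0-side has source Sum.inr o1, for designated interface vertices i1 o1 : V1. Let (E2, Tin2, Tout2) be a well-typed typed directed graph on V2 with interface vertices i2 o2 : V2 satisfying Tin2 i2 = Tin1 i1 and Tout2 o2 = Tout1 o1. Then the mutated graph E' on V0 ⊕ V2 — with E' (Sum.inl x) (Sum.inl y) ↔ E (Sum.inl x) (Sum.inl y), E' (Sum.inr x) (Sum.inr y) ↔ E2 x y, E' (Sum.inl x) (Sum.inr y) ↔ (E (Sum.inl x) (Sum.inr i1) ∧ y = i2), and E' (Sum.inr x) (Sum.inl y) ↔ (x = o2 ∧ E (Sum.inr o1) (Sum.inl y)) — is well-typed for the componentwise type assignments (Tin0, Tout0) on V0 and (Tin2, Tout2) on V2. -/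
theorem subgraphMutation_wellTyped_general {V0 V1 V2 L : Type*}
    (E : V0 ⊕ V1 → V0 ⊕ V1 → Prop)
    (Tin0 Tout0 : V0 → L) (Tin1 Tout1 : V1 → L)
    (hwt : ∀ u v, E u v → Sum.elim Tout0 Tout1 u = Sum.elim Tin0 Tin1 v)
    (i1 o1 : V1)
    (E2 : V2 → V2 → Prop) (Tin2 Tout2 : V2 → L)
    (hwt2 : ∀ u v, E2 u v → Tout2 u = Tin2 v)
    (i2 o2 : V2) (htyin : Tin2 i2 = Tin1 i1) (htyout : Tout2 o2 = Tout1 o1)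
    (E' : V0 ⊕ V2 → V0 ⊕ V2 → Prop)
    (hE'll : ∀ (x y : V0), E' (Sum.inl x) (Sum.inl y) ↔ E (Sum.inl x) (Sum.inl y))
    (hE'rr : ∀ (x y : V2), E' (Sum.inr x) (Sum.inr y) ↔ E2 x y)
    (hE'lr : ∀ (x : V0) (y : V2),
      E' (Sum.inl x) (Sum.inr y) ↔ (E (Sum.inl x) (Sum.inr i1) ∧ y = i2))
    (hE'rl : ∀ (x : V2) (y : V0),
      E' (Sum.inr x) (Sum.inl y) ↔ (x = o2 ∧ E (Sum.inr o1) (Sum.inl y))) :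
    ∀ u v : V0 ⊕ V2, E' u v →
      Sum.elim Tout0 Tout2 u = Sum.elim Tin0 Tin2 v := by
  rintro (x | x) (y | y) h
  · exact hwt _ _ ((hE'll x y).mp h)
  · obtain ⟨hE, rfl⟩ := (hE'lr x y).mp h
    exact (hwt _ _ hE).trans htyin.symm
  · obtain ⟨rfl, hE⟩ := (hE'rl x y).mp h
    exact htyout.trans (hwt _ _ hE)
  · exact hwt2 _ _ ((hE'rr x y).mp h)

/-- Subgraph mutation: replacing the `V1`-part of a graph on `V0 ⊕ V1` by a
graph `E2` on `V2` whose interface input/output types match those of the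
replaced part yields a well-typed graph on `V0 ⊕ V2`. -/
theorem subgraphMutation_wellTyped {V0 V1 V2 L : Type*}
    (E : V0 ⊕ V1 → V0 ⊕ V1 → Prop)
    (Tin0 Tout0 : V0 → L) (Tin1 Tout1 : V1 → L)
    (hwt : ∀ u v, E u v → Sum.elim Tout0 Tout1 u = Sum.elim Tin0 Tin1 v)
    (i1 o1 : V1)
    (hcross_in : ∀ (x : V0) (y : V1), E (Sum.inl x) (Sum.inr y) → y = i1)
    (hcross_out : ∀ (x : V1) (y : V0), E (Sum.inr x) (Sum.inl y) → x = o1)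
    (E2 : V2 → V2 → Prop) (Tin2 Tout2 : V2 → L)
    (hwt2 : ∀ u v, E2 u v → Tout2 u = Tin2 v)
    (i2 o2 : V2) (htyin : Tin2 i2 = Tin1 i1) (htyout : Tout2 o2 = Tout1 o1)
    (E' : V0 ⊕ V2 → V0 ⊕ V2 → Prop)
    (hE'll : ∀ (x y : V0), E' (Sum.inl x) (Sum.inl y) ↔ E (Sum.inl x) (Sum.inl y))
    (hE'rr : ∀ (x y : V2), E' (Sum.inr x) (Sum.inr y) ↔ E2 x y)
    (hE'lr : ∀ (x : V0) (y : V2),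
      E' (Sum.inl x) (Sum.inr y) ↔ (E (Sum.inl x) (Sum.inr i1) ∧ y = i2))
    (hE'rl : ∀ (x : V2) (y : V0),
      E' (Sum.inr x) (Sum.inl y) ↔ (x = o2 ∧ E (Sum.inr o1) (Sum.inl y))) :
    ∀ u v : V0 ⊕ V2, E' u v →
      Sum.elim Tout0 Tout2 u = Sum.elim Tin0 Tin2 v :=
  subgraphMutation_wellTyped_general E Tin0 Tout0 Tin1 Tout1 hwt i1 o1 E2 Tin2 Tout2 hwt2 i2 o2
    htyin htyout E' hE'll hE'rr hE'lr hE'rl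
end
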